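/- arXiv:1608.07308 — 2 statements merged into one kernel-verified Lean document; each statement's English description precedes it below -/
import Mathlib

section
/- Let C be a monoidal category with unit object 𝟙, and let F be an invertible object of C. Then for every object C of C there is a bijection Hom(𝟙, F ⊗ C) ≅ Hom(𝟙, C ⊗ F). -/
/-!
Tensoring with `Finv`, on either side, is an autoequivalence of `C` with inverse tensoring with `F`.
Transposing along these adjoint equivalences identifies both `Hom(𝟙, F ⊗ X)` and `Hom(𝟙, X ⊗ F)`
with `Hom(Finv, X)`.
-/

open CategoryTheory MonoidalCategory

namespace CategoryTheory.MonoidalCategory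

variable {C : Type*} [Category C] [MonoidalCategory C] {F Finv : C}

def tensorLeftEquivalence (h₁ : F ⊗ Finv ≅ 𝟙_ C) (h₂ : Finv ⊗ F ≅ 𝟙_ C) : C ≌ C :=
  Equivalence.mk (tensorLeft Finv) (tensorLeft F)
    ((leftUnitorNatIso C).symm ≪≫ (tensoringLeft C).mapIso h₁.symm ≪≫ tensorLeftTensor F Finv)
    ((tensorLeftTensor Finv F).symm ≪≫ (tensoringLeft C).mapIso h₂ ≪≫ leftUnitorNatIso C)

def tensorRightEquivalence (h₁ : F ⊗ Finv ≅ 𝟙_ C) (h₂ : Finv ⊗ F ≅ 𝟙_ C) : C ≌ C :=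
  Equivalence.mk (tensorRight Finv) (tensorRight F)
    ((rightUnitorNatIso C).symm ≪≫ (tensoringRight C).mapIso h₂.symm ≪≫ tensorRightTensor Finv F)
    ((tensorRightTensor F Finv).symm ≪≫ (tensoringRight C).mapIso h₁ ≪≫ rightUnitorNatIso C)

def unitHomTensorLeftEquiv (h₁ : F ⊗ Finv ≅ 𝟙_ C) (h₂ : Finv ⊗ F ≅ 𝟙_ C) (X : C) :
    (𝟙_ C ⟶ F ⊗ X) ≃ (Finv ⟶ X) :=
  ((tensorLeftEquivalence h₁ h₂).toAdjunction.homEquiv (𝟙_ C) X).symm.trans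
    ((ρ_ Finv).homCongr (Iso.refl X))

def unitHomTensorRightEquiv (h₁ : F ⊗ Finv ≅ 𝟙_ C) (h₂ : Finv ⊗ F ≅ 𝟙_ C) (X : C) :
    (𝟙_ C ⟶ X ⊗ F) ≃ (Finv ⟶ X) :=
  ((tensorRightEquivalence h₁ h₂).toAdjunction.homEquiv (𝟙_ C) X).symm.trans
    ((λ_ Finv).homCongr (Iso.refl X))

end CategoryTheory.MonoidalCategory

/-- If `F` is an invertible object of a monoidal category, then for every object
`X` there is a bijection `Hom(𝟙, F ⊗ X) ≃ Hom(𝟙, X ⊗ F)`. -/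
theorem invertible_hom_unit_tensor_comm
    {C : Type*} [Category C] [MonoidalCategory C]
    (F Finv : C) (h₁ : F ⊗ Finv ≅ 𝟙_ C) (h₂ : Finv ⊗ F ≅ 𝟙_ C) :
    ∀ X : C, Nonempty ((𝟙_ C ⟶ F ⊗ X) ≃ (𝟙_ C ⟶ X ⊗ F)) := fun X =>
  ⟨(unitHomTensorLeftEquiv h₁ h₂ X).trans (unitHomTensorRightEquiv h₁ h₂ X).symm⟩
end

section
/- Let D and C be monoidal categories and F : D → C a strong monoidal functor with right adjoint G. Assume that the canonical lax unit map 𝟙_D → G(𝟙_C) is an isomorphism and that the canonical projection-formula morphism p_{M,C} : M ⊗ G(C) → G(F(M) ⊗ C) is an isomorphism for all objects M of D and C of C. Then the adjunction unit η_M : M → G(F(M)) is an isomorphism for every object M of D; consequently F is fully faithful, and in particular Hom_C(𝟙_C, F(M)) ≅ Hom_D(𝟙_D, M) for every object M of D. -/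
open CategoryTheory MonoidalCategory CategoryTheory.Functor.LaxMonoidal
  CategoryTheory.Functor.OplaxMonoidal

/-!
Specialising the projection formula to `X = 𝟙_C` and conjugating by the right unitors of `M` and
`F M` recovers the adjunction unit: `η_M` factors as `M ◁ (𝟙_D → G 𝟙_C)` followed by
`p_{M,𝟙_C}`, and both are isomorphisms. The factorisation holds because its transpose is
`F ρ⁻¹ ≫ δ ≫ F M ◁ η ≫ ρ = 𝟙` by a triangle identity and the right unitality of `F`.
An adjunction whose unit is an isomorphism has a fully faithful left adjoint, and `F 𝟙_D ≅ 𝟙_C`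
turns `Hom(F 𝟙_D, F M) ≃ Hom(𝟙_D, M)` into `Hom(𝟙_C, F M) ≃ Hom(𝟙_D, M)`.
-/

namespace CategoryTheory.Adjunction

variable {D C : Type*} [Category D] [Category C] [MonoidalCategory D] [MonoidalCategory C]
  {F : D ⥤ C} {G : C ⥤ D} (adj : F ⊣ G) [F.OplaxMonoidal]

def projectionMap (M : D) (X : C) : M ⊗ G.obj X ⟶ G.obj (F.obj M ⊗ X) :=
  adj.unit.app (M ⊗ G.obj X) ≫ G.map (δ F M (G.obj X)) ≫ G.map (F.obj M ◁ adj.counit.app X)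

-- `adj.homEquiv _ _ (η F) = adj.unit.app _ ≫ G.map (η F)` is the lax unit map of `G`.
lemma unit_app_eq_projectionMap_unit (M : D) :
    adj.unit.app M = (ρ_ M).inv ≫ M ◁ adj.homEquiv _ _ (η F) ≫
      adj.projectionMap M (𝟙_ C) ≫ G.map (ρ_ (F.obj M)).hom := by
  have hcounit : F.map (adj.homEquiv _ _ (η F)) ≫ adj.counit.app (𝟙_ C) = η F :=
    (adj.homEquiv _ _).symm_apply_apply _
  have hFcomp : F.map (ρ_ M).inv ≫ F.map (M ◁ adj.homEquiv _ _ (η F)) ≫ δ F M (G.obj (𝟙_ C)) ≫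
      F.obj M ◁ adj.counit.app (𝟙_ C) ≫ (ρ_ (F.obj M)).hom = 𝟙 _ := by
    rw [← δ_natural_right_assoc, ← MonoidalCategory.whiskerLeft_comp_assoc, hcounit,
      right_unitality_hom, ← F.map_comp, Iso.inv_hom_id, F.map_id]
  rw [projectionMap, Category.assoc, Category.assoc, ← adj.unit_naturality_assoc,
    ← adj.unit_naturality_assoc]
  simp only [← G.map_comp, hFcomp, G.map_id, Category.comp_id]

lemma isIso_unit_app_of_isIso_projectionMap [IsIso (adj.homEquiv _ _ (η F))]
    [∀ M, IsIso (adj.projectionMap M (𝟙_ C))] (M : D) : IsIso (adj.unit.app M) := by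
  rw [unit_app_eq_projectionMap_unit]
  infer_instance

end CategoryTheory.Adjunction

/-- Let `F : D ⥤ C` be a strong monoidal functor with right adjoint `G`.
If the canonical lax unit map `𝟙_D ⟶ G (𝟙_C)` is an isomorphism, and for all `M : D`, `X : C`
the canonical projection-formula morphism `M ⊗ G X ⟶ G (F M ⊗ X)` is an isomorphism, then the
adjunction unit `η_M : M ⟶ G (F M)` is an isomorphism for every `M`; consequently `F` is fully
faithful, and in particular `Hom(𝟙_C, F M) ≃ Hom(𝟙_D, M)` for every `M`. -/
theorem monoidal_projection_formula_unit_isIso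
    {D C : Type*} [Category D] [Category C] [MonoidalCategory D] [MonoidalCategory C]
    (F : D ⥤ C) [F.Monoidal] (G : C ⥤ D) (adj : F ⊣ G)
    (hunit : IsIso (adj.unit.app (𝟙_ D) ≫ G.map (η F)))
    (hproj : ∀ (M : D) (X : C),
      IsIso (adj.unit.app (M ⊗ G.obj X) ≫ G.map (δ F M (G.obj X)) ≫
        G.map (F.obj M ◁ adj.counit.app X))) :
    (∀ M : D, IsIso (adj.unit.app M)) ∧ F.Full ∧ F.Faithful ∧
      (∀ M : D, Nonempty ((𝟙_ C ⟶ F.obj M) ≃ (𝟙_ D ⟶ M))) := by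
  have : IsIso (adj.homEquiv _ _ (η F)) := hunit
  have : ∀ M, IsIso (adj.projectionMap M (𝟙_ C)) := fun M ↦ hproj M (𝟙_ C)
  have hiso : ∀ M, IsIso (adj.unit.app M) := adj.isIso_unit_app_of_isIso_projectionMap
  have : IsIso adj.unit := NatIso.isIso_of_isIso_app _
  let ff := adj.fullyFaithfulLOfIsIsoUnit
  exact ⟨hiso, ff.full, ff.faithful, fun M ↦
    ⟨((Functor.Monoidal.εIso F).homCongr (Iso.refl _)).trans ff.homEquiv.symm⟩⟩
end
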